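/- arXiv:1707.01971 — 7 statements merged into one kernel-verified Lean document; each statement's English description precedes it below -/
import Mathlib

section
/- If ℓ_1,...,ℓ_D are K-linearly independent elements of Q*, where D = dim_K Q, then ann(u_{ℓ_1},...,u_{ℓ_D}) = ker(u_{ℓ_1},...,u_{ℓ_D}) = I. -/
/-!
Evaluating at the origin shows `ann(u) ⊆ ker(u)`, and `⟨u_ℓ | f⟩ = ℓ(f mod I)` gives
`I ⊆ ann(u_ℓ)`. Conversely, `D` independent forms span the `D`-dimensional space `Q*`, so
`f mod I` is killed by every linear form on `Q` and hence vanishes: `ker(u_{ℓ_1},…,u_{ℓ_D}) ⊆ I`.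
-/

open MvPolynomial

/-- `⟨u ∣ f⟩ = ∑_m f_m u(m)`, the pairing of a sequence `u : ℕ^n → K`
with a polynomial `f ∈ K[X_1,…,X_n]`. -/
noncomputable def seqBracket {K : Type*} [Field K] {n : ℕ}
    (u : (Fin n →₀ ℕ) → K) (f : MvPolynomial (Fin n) K) : K :=
  ∑ m ∈ f.support, coeff m f * u m

/-- The action of polynomials on sequences: `(f·u)(m) = ⟨u ∣ X^m f⟩`. -/
noncomputable def seqAct {K : Type*} [Field K] {n : ℕ}
    (f : MvPolynomial (Fin n) K) (u : (Fin n →₀ ℕ) → K) : (Fin n →₀ ℕ) → K :=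
  fun m => seqBracket u (monomial m 1 * f)

/-- The sequence `u_ℓ(m) = ℓ(X^m mod I)` attached to a linear form `ℓ` on `K[X]/I`. -/
noncomputable def useq {K : Type*} [Field K] {n : ℕ}
    (I : Ideal (MvPolynomial (Fin n) K))
    (ℓ : Module.Dual K (MvPolynomial (Fin n) K ⧸ I)) : (Fin n →₀ ℕ) → K :=
  fun m => ℓ (Ideal.Quotient.mk I (monomial m 1))

section
variable {K : Type*} [Field K] {n : ℕ}

theorem seqBracket_eq_seqAct_zero (u : (Fin n →₀ ℕ) → K) (f : MvPolynomial (Fin n) K) :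
    seqBracket u f = seqAct f u 0 := by
  rw [seqAct, monomial_zero', C_1, one_mul]

theorem seqBracket_useq (I : Ideal (MvPolynomial (Fin n) K))
    (ℓ : Module.Dual K (MvPolynomial (Fin n) K ⧸ I)) (f : MvPolynomial (Fin n) K) :
    seqBracket (useq I ℓ) f = ℓ (Ideal.Quotient.mk I f) := by
  conv_rhs => rw [f.as_sum, map_sum, map_sum]
  refine Finset.sum_congr rfl fun m _ => ?_
  have : monomial m (coeff m f) = coeff m f • monomial m 1 := by
    rw [smul_monomial, smul_eq_mul, mul_one]
  rw [this, ← Ideal.Quotient.mkₐ_eq_mk K, map_smul, map_smul, smul_eq_mul]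
  rfl

theorem seqBracket_useq_eq_zero_of_mem {I : Ideal (MvPolynomial (Fin n) K)}
    (ℓ : Module.Dual K (MvPolynomial (Fin n) K ⧸ I)) {f : MvPolynomial (Fin n) K} (hf : f ∈ I) :
    seqBracket (useq I ℓ) f = 0 := by
  rw [seqBracket_useq, Ideal.Quotient.eq_zero_iff_mem.mpr hf, map_zero]

theorem seqAct_useq_eq_zero_of_mem {I : Ideal (MvPolynomial (Fin n) K)}
    (ℓ : Module.Dual K (MvPolynomial (Fin n) K ⧸ I)) {f : MvPolynomial (Fin n) K} (hf : f ∈ I) :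
    seqAct f (useq I ℓ) = 0 :=
  funext fun _ => seqBracket_useq_eq_zero_of_mem ℓ (I.mul_mem_left _ hf)

end

theorem Module.Dual.forall_apply_eq_zero_iff_of_span_eq_top {R M ι : Type*} [CommSemiring R]
    [AddCommMonoid M] [Module R M] [Module.Projective R M] {ℓ : ι → Module.Dual R M}
    (hspan : Submodule.span R (Set.range ℓ) = ⊤) (v : M) :
    (∀ i, ℓ i v = 0) ↔ v = 0 := by
  refine ⟨fun h => ?_, fun h i => by rw [h, map_zero]⟩
  have : Module.Dual.eval R M v = 0 :=
    LinearMap.ext_on_range hspan fun i => h i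
  exact (Module.forall_dual_apply_eq_zero_iff R v).mp (LinearMap.congr_fun this)

theorem stmt2_general {K : Type*} [Field K] {n : ℕ}
    (I : Ideal (MvPolynomial (Fin n) K))
    (hI : FiniteDimensional K (MvPolynomial (Fin n) K ⧸ I))
    (ℓ : Fin (Module.finrank K (MvPolynomial (Fin n) K ⧸ I)) →
        Module.Dual K (MvPolynomial (Fin n) K ⧸ I))
    (hind : LinearIndependent K ℓ) :
    (∀ f : MvPolynomial (Fin n) K,
        (∀ i, seqAct f (useq I (ℓ i)) = 0) ↔ f ∈ I) ∧
    (∀ f : MvPolynomial (Fin n) K,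
        (∀ i, seqBracket (useq I (ℓ i)) f = 0) ↔ f ∈ I) := by
  have hspan : Submodule.span K (Set.range ℓ) = ⊤ :=
    hind.span_eq_top_of_card_eq_finrank' (by simp [Subspace.dual_finrank_eq])
  have ker_le : ∀ f, (∀ i, seqBracket (useq I (ℓ i)) f = 0) → f ∈ I := fun f hf => by
    rw [← Ideal.Quotient.eq_zero_iff_mem,
      ← Module.Dual.forall_apply_eq_zero_iff_of_span_eq_top hspan]
    simpa only [seqBracket_useq] using hf
  refine ⟨fun f => ⟨fun hf => ker_le f fun i => ?_, fun hf i => seqAct_useq_eq_zero_of_mem _ hf⟩,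
    fun f => ⟨ker_le f, fun hf i => seqBracket_useq_eq_zero_of_mem _ hf⟩⟩
  rw [seqBracket_eq_seqAct_zero, hf i, Pi.zero_apply]

/-- If `ℓ_1,…,ℓ_D` are `K`-linearly independent in `Q*`, with
`D = dim_K Q`, then `ann(u_{ℓ_1},…,u_{ℓ_D}) = ker(u_{ℓ_1},…,u_{ℓ_D}) = I`. -/
theorem stmt2 {K : Type*} [Field K] {n : ℕ} (hn : 1 ≤ n)
    (I : Ideal (MvPolynomial (Fin n) K))
    (hI : FiniteDimensional K (MvPolynomial (Fin n) K ⧸ I))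
    (ℓ : Fin (Module.finrank K (MvPolynomial (Fin n) K ⧸ I)) →
        Module.Dual K (MvPolynomial (Fin n) K ⧸ I))
    (hind : LinearIndependent K ℓ) :
    (∀ f : MvPolynomial (Fin n) K,
        (∀ i, seqAct f (useq I (ℓ i)) = 0) ↔ f ∈ I) ∧
    (∀ f : MvPolynomial (Fin n) K,
        (∀ i, seqBracket (useq I (ℓ i)) f = 0) ↔ f ∈ I) :=
  stmt2_general I hI ℓ hind
end

section
/- Let n ≥ 1 and δ ≥ 1, and let u : ℕ^n → K be the sequence with u(m) = 1 if m_1 + ... + m_n < δ and u(m) = 0 otherwise. Then ann(u) is the ideal ⟨X_1 − X_n, ..., X_{n−1} − X_n, X_n^δ⟩ of K[X_1,...,X_n], and dim_K K[X_1,...,X_n]/ann(u) = δ. -/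
/-!
Substituting a single variable `T` for every `X_i` gives a surjection
`φ : K[X_1, …, X_{n+1}] → K[T]` whose kernel is generated by the `X_i - X_{n+1}`, so the
ideal in question is `φ⁻¹ (T^δ)`. Since `u(m)` depends only on `|m|`, we have
`⟨u | f⟩ = ∑_{j < δ} coeff_j (φ f)`, hence `f · u = 0` iff `∑_{j < δ} coeff_j (T^s φ f) = 0`
for all `s`; these are the partial sums `∑_{k < d} coeff_k (φ f)` for `d ≤ δ`, and they all
vanish iff `T^δ ∣ φ f`. Finally `K[X] / φ⁻¹ (T^δ) ≃ K[T] / (T^δ)` has dimension `δ`.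
-/

open MvPolynomial

namespace Polynomial

variable {R : Type*} [Semiring R]

theorem sum_range_coeff_X_pow_mul (p : Polynomial R) (s d : ℕ) :
    ∑ j ∈ Finset.range (s + d), (X ^ s * p).coeff j = ∑ k ∈ Finset.range d, p.coeff k := by
  rw [Finset.sum_range_add, Finset.sum_eq_zero fun j hj => ?_, zero_add]
  · simp only [coeff_X_pow_mul', Nat.le_add_right, if_true, Nat.add_sub_cancel_left]
  · rw [coeff_X_pow_mul', if_neg (by simpa using hj)]

theorem X_pow_dvd_iff_forall_sum_range_coeff_X_pow_mul {p : Polynomial R} {δ : ℕ} :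
    X ^ δ ∣ p ↔ ∀ s, ∑ j ∈ Finset.range δ, (X ^ s * p).coeff j = 0 := by
  constructor
  · rintro ⟨q, rfl⟩ s
    refine Finset.sum_eq_zero fun j hj => ?_
    rw [Finset.mem_range] at hj
    rw [← mul_assoc, ← pow_add, coeff_X_pow_mul', if_neg (by omega)]
  · intro h
    have sum_eq_zero : ∀ d ≤ δ, ∑ k ∈ Finset.range d, p.coeff k = 0 := fun d hd => by
      rw [← sum_range_coeff_X_pow_mul p (δ - d), Nat.sub_add_cancel hd, h]
    refine X_pow_dvd_iff.mpr fun d hd => ?_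
    simpa only [Finset.sum_range_succ, sum_eq_zero d hd.le, zero_add] using sum_eq_zero (d + 1) hd

end Polynomial

theorem Ideal.finrank_quotient_comap_of_surjective {R A B : Type*} [CommRing R] [CommRing A]
    [CommRing B] [Algebra R A] [Algebra R B] {f : A →ₐ[R] B} (hf : Function.Surjective f)
    (J : Ideal B) : Module.finrank R (A ⧸ J.comap f) = Module.finrank R (B ⧸ J) := by
  have hker : RingHom.ker ((Ideal.Quotient.mkₐ R J).comp f) = J.comap f := by
    ext a
    simp [RingHom.mem_ker, Ideal.Quotient.eq_zero_iff_mem]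
  have hsurj : Function.Surjective ((Ideal.Quotient.mkₐ R J).comp f) :=
    (Ideal.Quotient.mkₐ_surjective R J).comp hf
  exact ((Ideal.quotientEquivAlgOfEq R hker.symm).trans
    (Ideal.quotientKerAlgEquivOfSurjective hsurj)).toLinearEquiv.finrank_eq

namespace MvPolynomial

section CommSemiring

variable {σ R : Type*} [CommSemiring R]

theorem aeval_const_X_monomial (m : σ →₀ ℕ) (c : R) :
    aeval (fun _ => Polynomial.X) (monomial m c) = Polynomial.monomial m.degree c := by
  rw [aeval_monomial, Finsupp.prod, Finset.prod_pow_eq_pow_sum, Polynomial.algebraMap_eq,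
    Polynomial.C_mul_X_pow_eq_monomial, Finsupp.degree_apply]

theorem aeval_const_X_aeval_X (i : σ) (q : Polynomial R) :
    aeval (fun _ => Polynomial.X) (Polynomial.aeval (X i : MvPolynomial σ R) q) = q := by
  rw [← Polynomial.aeval_algHom_apply, aeval_X, Polynomial.aeval_X_left_apply]

theorem aeval_const_X_surjective [Nonempty σ] :
    Function.Surjective (aeval (fun _ => Polynomial.X) : MvPolynomial σ R →ₐ[R] Polynomial R) :=
  fun q => ⟨_, aeval_const_X_aeval_X (Classical.arbitrary σ) q⟩

end CommSemiring

section CommRing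

variable {R : Type*} [CommRing R] {n : ℕ}

theorem ker_aeval_const_X :
    RingHom.ker (aeval fun _ => Polynomial.X : MvPolynomial (Fin (n + 1)) R →ₐ[R] Polynomial R) =
      Ideal.span (Set.range fun i : Fin n => X i.castSucc - X (Fin.last n)) := by
  set J := Ideal.span (Set.range fun i : Fin n =>
    (X i.castSucc - X (Fin.last n) : MvPolynomial (Fin (n + 1)) R))
  refine le_antisymm (fun f hf => ?_) (Ideal.span_le.mpr ?_)
  · -- modulo `J` every `X_i` is `X_{n+1}`, so `f ≡ (φ f)(X_{n+1})`
    have hcongr : (Ideal.Quotient.mkₐ R J).comp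
        ((Polynomial.aeval (X (Fin.last n))).comp (aeval fun _ => Polynomial.X)) =
          Ideal.Quotient.mkₐ R J := by
      refine algHom_ext fun i => ?_
      simp only [AlgHom.comp_apply, aeval_X, Polynomial.aeval_X, Ideal.Quotient.mkₐ_eq_mk,
        Ideal.Quotient.eq]
      induction i using Fin.lastCases with
      | last => simp
      | cast i =>
        rw [← neg_mem_iff, neg_sub]
        exact Ideal.subset_span ⟨i, rfl⟩
    have hf' := DFunLike.congr_fun hcongr f
    rw [AlgHom.comp_apply, AlgHom.comp_apply, RingHom.mem_ker.mp hf, map_zero, map_zero] at hf'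
    exact Ideal.Quotient.eq_zero_iff_mem.mp hf'.symm
  · rintro _ ⟨i, rfl⟩
    simp

theorem span_sub_X_last_union_X_last_pow_eq_comap (δ : ℕ) :
    Ideal.span ((Set.range fun i : Fin n =>
        (X i.castSucc - X (Fin.last n) : MvPolynomial (Fin (n + 1)) R)) ∪ {X (Fin.last n) ^ δ}) =
      Ideal.comap (aeval fun _ => Polynomial.X : MvPolynomial (Fin (n + 1)) R →ₐ[R] Polynomial R)
        (Ideal.span {Polynomial.X ^ δ}) := by
  rw [Ideal.span_union, ← ker_aeval_const_X, RingHom.ker_eq_comap_bot, sup_comm,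
    ← Ideal.comap_map_of_surjective _ (aeval_const_X_surjective (σ := Fin (n + 1)) (R := R)),
    Ideal.map_span, Set.image_singleton, map_pow, aeval_X]

end CommRing

end MvPolynomial

section Sequences

variable {K : Type*} [Field K] {n : ℕ}

theorem seqBracket_add (u : (Fin n →₀ ℕ) → K) (f g : MvPolynomial (Fin n) K) :
    seqBracket u (f + g) = seqBracket u f + seqBracket u g := by
  simp only [seqBracket, ← sum_def (b := fun m c => c * u m), AddMonoidAlgebra.coeff_add]
  exact Finsupp.sum_add_index' (fun _ => zero_mul _) fun _ _ _ => add_mul _ _ _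

theorem seqBracket_monomial (u : (Fin n →₀ ℕ) → K) (k : Fin n →₀ ℕ) (c : K) :
    seqBracket u (monomial k c) = c * u k := by
  rw [seqBracket, ← sum_def (b := fun m c => c * u m), sum_monomial_eq (zero_mul (u k))]

theorem seqBracket_eq_sum_range_coeff {δ : ℕ} {u : (Fin n →₀ ℕ) → K}
    (hu : ∀ m, u m = if m.degree < δ then 1 else 0) (f : MvPolynomial (Fin n) K) :
    seqBracket u f = ∑ j ∈ Finset.range δ, (aeval (fun _ => Polynomial.X) f).coeff j := by
  induction f using MvPolynomial.induction_on' with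
  | monomial m c =>
    simp only [seqBracket_monomial, hu, aeval_const_X_monomial, Polynomial.coeff_monomial,
      Finset.sum_ite_eq, Finset.mem_range, mul_ite, mul_one, mul_zero]
  | add f g hf hg =>
    simp only [seqBracket_add, hf, hg, map_add, Polynomial.coeff_add, Finset.sum_add_distrib]

theorem seqAct_eq_zero_iff [NeZero n] {δ : ℕ} {u : (Fin n →₀ ℕ) → K}
    (hu : ∀ m, u m = if m.degree < δ then 1 else 0) (f : MvPolynomial (Fin n) K) :
    seqAct f u = 0 ↔ (Polynomial.X : Polynomial K) ^ δ ∣ aeval (fun _ => Polynomial.X) f := by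
  simp only [Polynomial.X_pow_dvd_iff_forall_sum_range_coeff_X_pow_mul, funext_iff, seqAct,
    Pi.zero_apply, seqBracket_eq_sum_range_coeff hu, map_mul, aeval_const_X_monomial,
    Polynomial.monomial_one_right_eq_X_pow]
  exact ⟨fun h s => by simpa using h (Finsupp.single 0 s), fun h m => h _⟩

end Sequences

theorem stmt8_general {K : Type*} [Field K] (n : ℕ) (δ : ℕ)
    (u : (Fin (n + 1) →₀ ℕ) → K)
    (hu : ∀ m : Fin (n + 1) →₀ ℕ,
        u m = if (m.sum fun _ e => e) < δ then 1 else 0) :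
    (∀ f : MvPolynomial (Fin (n + 1)) K,
        seqAct f u = 0 ↔
          f ∈ Ideal.span
            ((Set.range fun i : Fin n =>
                (X i.castSucc - X (Fin.last n) : MvPolynomial (Fin (n + 1)) K)) ∪
              {(X (Fin.last n) : MvPolynomial (Fin (n + 1)) K) ^ δ})) ∧
    Module.finrank K (MvPolynomial (Fin (n + 1)) K ⧸
        Ideal.span
          ((Set.range fun i : Fin n =>
              (X i.castSucc - X (Fin.last n) : MvPolynomial (Fin (n + 1)) K)) ∪
            {(X (Fin.last n) : MvPolynomial (Fin (n + 1)) K) ^ δ})) = δ := by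
  rw [span_sub_X_last_union_X_last_pow_eq_comap]
  refine ⟨fun f => ?_, ?_⟩
  · rw [seqAct_eq_zero_iff hu, Ideal.mem_comap, Ideal.mem_span_singleton]
  · rw [Ideal.finrank_quotient_comap_of_surjective aeval_const_X_surjective,
      finrank_quotient_span_eq_natDegree, Polynomial.natDegree_X_pow]

/-- With `n+1 ≥ 1` variables `X_1,…,X_{n+1}` (so `X_{n+1}` is the
last one), let `u(m) = 1` if `m_1 + … + m_{n+1} < δ` and `0` otherwise. Then
`ann(u) = ⟨X_1 − X_{n+1}, …, X_n − X_{n+1}, X_{n+1}^δ⟩` and the quotient of the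
polynomial ring by `ann(u)` has `K`-dimension `δ`. -/
theorem stmt8 {K : Type*} [Field K] (n : ℕ) (δ : ℕ) (hδ : 1 ≤ δ)
    (u : (Fin (n + 1) →₀ ℕ) → K)
    (hu : ∀ m : Fin (n + 1) →₀ ℕ,
        u m = if (m.sum fun _ e => e) < δ then 1 else 0) :
    (∀ f : MvPolynomial (Fin (n + 1)) K,
        seqAct f u = 0 ↔
          f ∈ Ideal.span
            ((Set.range fun i : Fin n =>
                (X i.castSucc - X (Fin.last n) : MvPolynomial (Fin (n + 1)) K)) ∪
              {(X (Fin.last n) : MvPolynomial (Fin (n + 1)) K) ^ δ})) ∧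
    Module.finrank K (MvPolynomial (Fin (n + 1)) K ⧸
        Ideal.span
          ((Set.range fun i : Fin n =>
              (X i.castSucc - X (Fin.last n) : MvPolynomial (Fin (n + 1)) K)) ∪
            {(X (Fin.last n) : MvPolynomial (Fin (n + 1)) K) ^ δ})) = δ :=
  stmt8_general n δ u hu
end

section
/- Let J be a proper zero-dimensional ideal of K[X_1,...,X_n] with D = dim_K K[X_1,...,X_n]/J, and let b_1 < ... < b_D be the standard monomials of J for the lexicographic order with X_1 > ... > X_n. If f_1 < ... < f_D are monomials whose residues modulo J are K-linearly independent, then b_m ≤ f_m for every m = 1,...,D; that is, the standard monomials form the lexicographically smallest increasing sequence of D monomials that is linearly independent modulo J. -/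
open MvPolynomial

/-- `a` is the leading monomial (for the lex order where earlier variables are
bigger) of the nonzero polynomial `f`. -/
def IsLeadMon {K : Type*} [Field K] {σ : Type*} [LinearOrder σ]
    (f : MvPolynomial σ K) (a : σ →₀ ℕ) : Prop :=
  a ∈ f.support ∧ ∀ b ∈ f.support, toLex b ≤ toLex a

/-- `a` is a standard monomial of the ideal `J` for the lexicographic order with
`X_1 > … > X_n`: it is not the leading monomial of any nonzero element of `J`. -/
def IsStdMon {K : Type*} [Field K] {σ : Type*} [LinearOrder σ]
    (J : Ideal (MvPolynomial σ K)) (a : σ →₀ ℕ) : Prop :=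
  ¬ ∃ f ∈ J, f ≠ 0 ∧ IsLeadMon f a

/-!
Every monomial `a` is congruent modulo `J` to a combination of standard monomials `≤ a`: if `a`
is not standard it is the leading monomial of some `g ∈ J`, and subtracting a multiple of `g`
replaces `a` by smaller monomials; lex order on finitely many variables is a well-order, so this
terminates. Hence if `f_m < b_m`, the `m` independent residues of `f_1, …, f_m` would lie in the
span of the residues of the `m - 1` standard monomials `b_1, …, b_{m-1}`.
-/

theorem LinearIndependent.card_le_of_forall_mem_span {K V ι κ : Type*} [Field K] [AddCommGroup V]
    [Module K V] [Fintype ι] [Fintype κ] {v : ι → V} (hv : LinearIndependent K v) (u : κ → V)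
    (h : ∀ i, v i ∈ Submodule.span K (Set.range u)) :
    Fintype.card ι ≤ Fintype.card κ := by
  classical
  exact (linearIndependent_le_span_aux' v hv (Set.range u) (by rintro _ ⟨i, rfl⟩; exact h i)).trans
    (Fintype.card_range_le u)

theorem Ideal.Quotient.mk_mem_of_forall_mk_monomial_mem {K σ : Type*} [Field K]
    (J : Ideal (MvPolynomial σ K)) {M : Submodule K (MvPolynomial σ K ⧸ J)} (p : MvPolynomial σ K)
    (h : ∀ d ∈ p.support, Ideal.Quotient.mk J (monomial d 1) ∈ M) :
    Ideal.Quotient.mk J p ∈ M := by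
  rw [p.as_sum, map_sum]
  refine Submodule.sum_mem _ fun d hd => ?_
  have hmon : monomial d (p.coeff d) = p.coeff d • monomial d (1 : K) := by
    rw [smul_monomial, smul_eq_mul, mul_one]
  rw [hmon, ← Ideal.Quotient.mkₐ_eq_mk K, map_smul]
  exact M.smul_mem _ (h d hd)

section

variable {K σ : Type*} [Field K] [LinearOrder σ] (J : Ideal (MvPolynomial σ K))

theorem exists_mk_monomial_eq_of_not_isStdMon {a : σ →₀ ℕ} (ha : ¬IsStdMon J a) :
    ∃ p : MvPolynomial σ K, Ideal.Quotient.mk J (monomial a 1) = Ideal.Quotient.mk J p ∧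
      ∀ d ∈ p.support, toLex d < toLex a := by
  obtain ⟨g, hgJ, -, hga, hgmax⟩ := not_not.mp ha
  have hc : g.coeff a ≠ 0 := mem_support_iff.mp hga
  refine ⟨monomial a 1 - (g.coeff a)⁻¹ • g, ?_, fun d hd => ?_⟩
  · rw [Ideal.Quotient.mk_eq_mk_iff_sub_mem, sub_sub_cancel]
    exact J.smul_of_tower_mem _ hgJ
  · have hd' := mem_support_iff.mp hd
    simp only [coeff_sub, coeff_monomial, coeff_smul, smul_eq_mul] at hd'
    have hda : a ≠ d := by
      rintro rfl
      simp [inv_mul_cancel₀ hc] at hd'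
    have hdg : d ∈ g.support := by
      rw [mem_support_iff]
      rintro h0
      simp [hda, h0] at hd'
    exact (hgmax d hdg).lt_of_ne fun e => hda (toLex.injective e).symm

theorem mk_monomial_mem_span_stdMon [Finite σ] (a : σ →₀ ℕ) :
    Ideal.Quotient.mk J (monomial a 1) ∈ Submodule.span K
      ((fun c => Ideal.Quotient.mk J (monomial c 1)) '' {c | IsStdMon J c ∧ toLex c ≤ toLex a}) := by
  have : WellFoundedLT (Lex (σ →₀ ℕ)) := Finsupp.Lex.wellFoundedLT_of_finite
  have hwf := InvImage.wf (toLex : (σ →₀ ℕ) → Lex _) wellFounded_lt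
  induction a using hwf.induction with
  | _ a ih =>
    by_cases ha : IsStdMon J a
    · exact Submodule.subset_span ⟨a, ⟨ha, le_rfl⟩, rfl⟩
    obtain ⟨p, hp, hlt⟩ := exists_mk_monomial_eq_of_not_isStdMon J ha
    rw [hp]
    refine Ideal.Quotient.mk_mem_of_forall_mk_monomial_mem J p fun d hd => ?_
    refine Submodule.span_mono (Set.image_mono fun c hc => ?_) (ih d (hlt d hd))
    exact ⟨hc.1, hc.2.trans (hlt d hd).le⟩

end

theorem stmt11_general {K : Type*} [Field K] {n : ℕ}
    (J : Ideal (MvPolynomial (Fin n) K))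
    (D : ℕ)
    (b : Fin D → (Fin n →₀ ℕ))
    (hbmono : StrictMono fun i => toLex (b i))
    (hball : ∀ a : Fin n →₀ ℕ, IsStdMon J a → ∃ i, b i = a)
    (f : Fin D → (Fin n →₀ ℕ))
    (hfmono : StrictMono fun i => toLex (f i))
    (hfind : LinearIndependent K
        fun i => Ideal.Quotient.mk J (monomial (f i) (1 : K)))
    (m : Fin D) :
    toLex (b m) ≤ toLex (f m) := by
  by_contra! hlt
  have hspan : ∀ j : Set.Iic m, Ideal.Quotient.mk J (monomial (f j) (1 : K)) ∈
      Submodule.span K (Set.range fun i : Set.Iio m => Ideal.Quotient.mk J (monomial (b i) 1)) := by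
    rintro ⟨j, hj⟩
    refine Submodule.span_mono ?_ (mk_monomial_mem_span_stdMon J (f j))
    rintro _ ⟨c, ⟨hc, hcf⟩, rfl⟩
    obtain ⟨i, rfl⟩ := hball c hc
    exact ⟨⟨i, hbmono.lt_iff_lt.mp (hcf.trans_lt ((hfmono.monotone hj).trans_lt hlt))⟩, rfl⟩
  have hcard := (hfind.comp _ Subtype.val_injective).card_le_of_forall_mem_span _ hspan
  rw [Fintype.card_Iic, Fintype.card_Iio, Fin.card_Iic, Fin.card_Iio] at hcard
  omega

/-- Let `J` be a proper zero-dimensional ideal with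
`D = dim_K K[X]/J` and let `b_1 < … < b_D` be its standard monomials for the
lex order with `X_1 > … > X_n`. If `f_1 < … < f_D` are monomials whose residues
modulo `J` are `K`-linearly independent, then `b_m ≤ f_m` for all `m`. -/
theorem stmt11 {K : Type*} [Field K] {n : ℕ} (hn : 1 ≤ n)
    (J : Ideal (MvPolynomial (Fin n) K)) (hJ : J ≠ ⊤)
    (hfin : FiniteDimensional K (MvPolynomial (Fin n) K ⧸ J))
    (D : ℕ) (hD : D = Module.finrank K (MvPolynomial (Fin n) K ⧸ J))
    (b : Fin D → (Fin n →₀ ℕ))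
    (hbmono : StrictMono fun i => toLex (b i))
    (hbstd : ∀ i, IsStdMon J (b i))
    (hball : ∀ a : Fin n →₀ ℕ, IsStdMon J a → ∃ i, b i = a)
    (f : Fin D → (Fin n →₀ ℕ))
    (hfmono : StrictMono fun i => toLex (f i))
    (hfind : LinearIndependent K
        fun i => Ideal.Quotient.mk J (monomial (f i) (1 : K)))
    (m : Fin D) :
    toLex (b m) ≤ toLex (f m) :=
  stmt11_general J D b hbmono hball f hfmono hfind m
end

section
/- Let J be a proper zero-dimensional ideal of K[X_1,...,X_n] and let d be the degree of the minimal polynomial of X_1 in K[X_1,...,X_n]/J. Then every standard monomial of J (for the lexicographic order with X_1 > ... > X_n) has the form X_1^a · m with 0 ≤ a < d and m a standard monomial of the elimination ideal J ∩ K[X_2,...,X_n] (for the induced lexicographic order on X_2,...,X_n). Consequently, the set {X_1^a · m : 0 ≤ a < d, m a standard monomial of J ∩ K[X_2,...,X_n]} spans K[X_1,...,X_n]/J as a K-vector space. -/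
/-!
Multiplying a polynomial by a monomial `X^c` shifts its lex-leading monomial by `c`, so the
standard monomials of `J` are closed under division. Since `X_1^d` is the leading monomial of
`P(X_1) ∈ J`, a standard monomial `X_1^{a_1} m` has `a_1 < d`; and `m` is standard for the
elimination ideal because `m` divides it and renaming variables along the strictly monotone
`Fin.succ` preserves lex-leading monomials. Spanning follows from dividing by all nonzero
elements of `J`: the remainder only involves standard monomials.
-/

open MvPolynomial

theorem Finsupp.toLex_mapDomain_lt_toLex_mapDomain {α β N : Type*} [LinearOrder α]
    [LinearOrder β] [AddCommMonoid N] [LinearOrder N] {f : α → β} (hf : StrictMono f)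
    {b c : α →₀ N} (h : toLex b < toLex c) :
    toLex (b.mapDomain f) < toLex (c.mapDomain f) := by
  obtain ⟨i, heq, hlt⟩ := Finsupp.Lex.lt_iff.mp h
  refine Finsupp.Lex.lt_iff.mpr ⟨f i, fun j hj => ?_, ?_⟩
  · by_cases hj' : j ∈ Set.range f
    · obtain ⟨j, rfl⟩ := hj'
      simpa [Finsupp.mapDomain_apply hf.injective] using heq j (hf.lt_iff_lt.mp hj)
    · simp [Finsupp.mapDomain_of_notMem_range _ _ hj']
  · simpa [Finsupp.mapDomain_apply hf.injective] using hlt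

theorem Finsupp.single_zero_add_mapDomain_succ_comapDomain_succ {M : Type*} [AddCommMonoid M]
    {n : ℕ} (a : Fin (n + 1) →₀ M) :
    Finsupp.single 0 (a 0) +
      (a.comapDomain Fin.succ (Fin.succ_injective n).injOn).mapDomain Fin.succ = a := by
  ext i
  cases i using Fin.cases with
  | zero =>
    have h0 : (0 : Fin (n + 1)) ∉ Set.range Fin.succ := by simp
    simp [Finsupp.mapDomain_of_notMem_range _ _ h0]
  | succ j => simp [Finsupp.mapDomain_apply (Fin.succ_injective n)]

section LeadingMonomial

variable {K σ : Type*} [Field K] [LinearOrder σ]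

theorem IsLeadMon.ne_zero {f : MvPolynomial σ K} {a : σ →₀ ℕ} (h : IsLeadMon f a) :
    f ≠ 0 := by
  rintro rfl
  simp [IsLeadMon] at h

theorem isLeadMon_iff_lex_degree_eq [WellFoundedGT σ] {f : MvPolynomial σ K} {a : σ →₀ ℕ} :
    IsLeadMon f a ↔ f ≠ 0 ∧ MonomialOrder.lex.degree f = a := by
  constructor
  · intro h
    refine ⟨h.ne_zero, MonomialOrder.lex.toSyn.injective (le_antisymm ?_ ?_)⟩
    · exact MonomialOrder.lex.degree_le_iff.mpr h.2
    · exact MonomialOrder.lex.le_degree h.1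
  · rintro ⟨hf, rfl⟩
    exact ⟨MonomialOrder.lex.degree_mem_support hf, fun b hb => MonomialOrder.lex.le_degree hb⟩

theorem IsLeadMon.monomial_mul [WellFoundedGT σ] {f : MvPolynomial σ K} {a : σ →₀ ℕ}
    (h : IsLeadMon f a) (c : σ →₀ ℕ) : IsLeadMon (monomial c 1 * f) (c + a) := by
  classical
  obtain ⟨hf, rfl⟩ := isLeadMon_iff_lex_degree_eq.mp h
  have hc : (monomial c (1 : K)) ≠ 0 := by simp
  refine isLeadMon_iff_lex_degree_eq.mpr ⟨mul_ne_zero hc hf, ?_⟩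
  rw [MonomialOrder.degree_mul hc hf, MonomialOrder.degree_monomial, if_neg one_ne_zero]

theorem IsLeadMon.rename {τ : Type*} [LinearOrder τ] {f : τ → σ} (hf : StrictMono f)
    {p : MvPolynomial τ K} {a : τ →₀ ℕ} (h : IsLeadMon p a) :
    IsLeadMon (rename f p) (a.mapDomain f) := by
  classical
  refine ⟨?_, fun b hb => ?_⟩
  · rw [mem_support_iff, coeff_rename_mapDomain f hf.injective]
    exact mem_support_iff.mp h.1
  · rw [support_rename_of_injective hf.injective, Finset.mem_image] at hb
    obtain ⟨b, hb, rfl⟩ := hb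
    rcases (h.2 b hb).lt_or_eq with hlt | heq
    · exact (Finsupp.toLex_mapDomain_lt_toLex_mapDomain hf hlt).le
    · rw [toLex.injective heq]

theorem isLeadMon_aeval_X (s : σ) {P : Polynomial K} (hP : P.Monic) :
    IsLeadMon (Polynomial.aeval (X s : MvPolynomial σ K) P) (Finsupp.single s P.natDegree) := by
  classical
  have hsum : Polynomial.aeval (X s : MvPolynomial σ K) P =
      ∑ i ∈ P.support, monomial (Finsupp.single s i) (P.coeff i) := by
    rw [Polynomial.aeval_def, Polynomial.eval₂_eq_sum, Polynomial.sum_def]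
    refine Finset.sum_congr rfl fun i _ => ?_
    rw [X_pow_eq_monomial, algebraMap_eq, C_mul_monomial, mul_one]
  refine ⟨?_, fun b hb => ?_⟩
  · rw [mem_support_iff, hsum, coeff_sum]
    simp [coeff_monomial, (Finsupp.single_injective s).eq_iff, hP.ne_zero]
  · rw [hsum] at hb
    obtain ⟨i, hi, hb⟩ := Finset.mem_biUnion.mp (support_sum hb)
    rw [Finset.mem_singleton.mp (support_monomial_subset hb)]
    exact Finsupp.toLex_monotone (Finsupp.single_mono (Polynomial.le_natDegree_of_mem_supp i hi))

end LeadingMonomial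

section StandardMonomial

variable {K σ : Type*} [Field K] [LinearOrder σ]

theorem IsStdMon.of_le [WellFoundedGT σ] {J : Ideal (MvPolynomial σ K)} {a b : σ →₀ ℕ}
    (ha : IsStdMon J a) (hba : b ≤ a) : IsStdMon J b := by
  rintro ⟨f, hfJ, -, hf⟩
  have hlead := hf.monomial_mul (a - b)
  rw [tsub_add_cancel_of_le hba] at hlead
  exact ha ⟨_, J.mul_mem_left _ hfJ, hlead.ne_zero, hlead⟩

theorem IsStdMon.apply_lt_natDegree [WellFoundedGT σ] {J : Ideal (MvPolynomial σ K)}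
    {a : σ →₀ ℕ} (ha : IsStdMon J a) {s : σ} {P : Polynomial K} (hP : P.Monic)
    (hPJ : Polynomial.aeval (X s) P ∈ J) : a s < P.natDegree := by
  have hlead := isLeadMon_aeval_X s hP
  by_contra! h
  exact ha.of_le (Finsupp.single_le_iff.mpr h) ⟨_, hPJ, hlead.ne_zero, hlead⟩

theorem IsStdMon.comap_rename {τ : Type*} [LinearOrder τ] {f : τ → σ} (hf : StrictMono f)
    {J : Ideal (MvPolynomial σ K)} {a : τ →₀ ℕ} (ha : IsStdMon J (a.mapDomain f)) :
    IsStdMon (J.comap (rename f : MvPolynomial τ K →ₐ[K] MvPolynomial σ K)) a := by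
  rintro ⟨p, hpJ, -, hp⟩
  have hlead := hp.rename hf
  exact ha ⟨_, Ideal.mem_comap.mp hpJ, hlead.ne_zero, hlead⟩

theorem span_mk_monomial_isStdMon_eq_top [WellFoundedGT σ] (J : Ideal (MvPolynomial σ K)) :
    Submodule.span K
      ((fun a => Ideal.Quotient.mk J (monomial a (1 : K))) '' {a | IsStdMon J a}) = ⊤ := by
  rw [eq_top_iff]
  rintro x -
  obtain ⟨f, rfl⟩ := Ideal.Quotient.mk_surjective x
  obtain ⟨g, r, hfr, -, hr⟩ := MonomialOrder.lex.div_set (B := {b | b ∈ J ∧ b ≠ 0})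
    (fun b hb => (MonomialOrder.lex.leadingCoeff_ne_zero_iff.mpr hb.2).isUnit) f
  have hmk : Ideal.Quotient.mk J f = Ideal.Quotient.mk J r := by
    rw [hfr, map_add, add_eq_right, Ideal.Quotient.eq_zero_iff_mem]
    have hspan := LinearMap.mem_range_self (Finsupp.linearCombination (MvPolynomial σ K)
      (fun b : {b | b ∈ J ∧ b ≠ 0} => (b : MvPolynomial σ K))) g
    rw [Finsupp.range_linearCombination] at hspan
    refine Submodule.span_le.mpr ?_ hspan
    rintro _ ⟨b, rfl⟩
    exact b.2.1
  have hstd : ∀ c ∈ r.support, IsStdMon J c := by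
    rintro c hc ⟨b, hbJ, hb0, hb⟩
    exact hr c hc b ⟨hbJ, hb0⟩ (isLeadMon_iff_lex_degree_eq.mp hb).2.le
  rw [hmk, r.as_sum, map_sum]
  refine Submodule.sum_mem _ fun c hc => ?_
  rw [← mul_one (coeff c r), ← smul_eq_mul, ← smul_monomial, ← Ideal.Quotient.mkₐ_eq_mk K,
    map_smul]
  exact Submodule.smul_mem _ _ (Submodule.subset_span ⟨c, hstd c hc, rfl⟩)

end StandardMonomial

theorem stmt12_general {K : Type*} [Field K] (n : ℕ)
    (J : Ideal (MvPolynomial (Fin (n + 1)) K))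
    (P : Polynomial K) (hPmonic : P.Monic)
    (hPmem : Polynomial.aeval (X (0 : Fin (n + 1)) : MvPolynomial (Fin (n + 1)) K) P ∈ J)
    (d : ℕ) (hd : d = P.natDegree) :
    (∀ a : Fin (n + 1) →₀ ℕ, IsStdMon J a →
        a 0 < d ∧
        IsStdMon
          (J.comap (MvPolynomial.rename (Fin.succ : Fin n → Fin (n + 1)) :
              MvPolynomial (Fin n) K →ₐ[K] MvPolynomial (Fin (n + 1)) K))
          (Finsupp.comapDomain Fin.succ a (Fin.succ_injective n).injOn)) ∧
    Submodule.span K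
      {q : MvPolynomial (Fin (n + 1)) K ⧸ J |
        ∃ a : ℕ, a < d ∧ ∃ m : Fin n →₀ ℕ,
          IsStdMon
            (J.comap (MvPolynomial.rename (Fin.succ : Fin n → Fin (n + 1)) :
                MvPolynomial (Fin n) K →ₐ[K] MvPolynomial (Fin (n + 1)) K)) m ∧
          q = Ideal.Quotient.mk J
              (monomial (Finsupp.single 0 a + Finsupp.mapDomain Fin.succ m) (1 : K))}
      = ⊤ := by
  subst hd
  have hstd (a : Fin (n + 1) →₀ ℕ) (ha : IsStdMon J a) : a 0 < P.natDegree ∧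
      IsStdMon (J.comap (rename Fin.succ : MvPolynomial (Fin n) K →ₐ[K] _))
        (a.comapDomain Fin.succ (Fin.succ_injective n).injOn) := by
    refine ⟨ha.apply_lt_natDegree hPmonic hPmem, (ha.of_le ?_).comap_rename Fin.strictMono_succ⟩
    conv_rhs => rw [← Finsupp.single_zero_add_mapDomain_succ_comapDomain_succ a]
    exact le_add_self
  refine ⟨hstd, eq_top_iff.mpr ?_⟩
  rw [← span_mk_monomial_isStdMon_eq_top J]
  refine Submodule.span_mono ?_
  rintro _ ⟨a, ha, rfl⟩
  exact ⟨a 0, (hstd a ha).1, _, (hstd a ha).2,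
    by rw [Finsupp.single_zero_add_mapDomain_succ_comapDomain_succ]⟩

/-- With `n+1 ≥ 2` variables `X_1,…,X_{n+1}` (here `X_1` is the
variable `0` and `X_2,…,X_{n+1}` are obtained via `Fin.succ`), let `J` be a proper
zero-dimensional ideal, `P` the minimal polynomial of `X_1` in `K[X]/J`, and
`d = deg P`. Then every standard monomial of `J` (for lex with `X_1 > … > X_{n+1}`)
is of the form `X_1^a · m` with `a < d` and `m` a standard monomial of the
elimination ideal `J ∩ K[X_2,…,X_{n+1}]`; consequently the set of all such
`X_1^a · m` spans `K[X]/J` as a `K`-vector space. -/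
theorem stmt12 {K : Type*} [Field K] (n : ℕ) (hn : 1 ≤ n)
    (J : Ideal (MvPolynomial (Fin (n + 1)) K)) (hJ : J ≠ ⊤)
    (hfin : FiniteDimensional K (MvPolynomial (Fin (n + 1)) K ⧸ J))
    (P : Polynomial K) (hPmonic : P.Monic)
    (hPmem : Polynomial.aeval (X (0 : Fin (n + 1)) : MvPolynomial (Fin (n + 1)) K) P ∈ J)
    (hPmin : ∀ Q : Polynomial K, Q.Monic →
        Polynomial.aeval (X (0 : Fin (n + 1)) : MvPolynomial (Fin (n + 1)) K) Q ∈ J →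
        P.natDegree ≤ Q.natDegree)
    (d : ℕ) (hd : d = P.natDegree) :
    (∀ a : Fin (n + 1) →₀ ℕ, IsStdMon J a →
        a 0 < d ∧
        IsStdMon
          (J.comap (MvPolynomial.rename (Fin.succ : Fin n → Fin (n + 1)) :
              MvPolynomial (Fin n) K →ₐ[K] MvPolynomial (Fin (n + 1)) K))
          (Finsupp.comapDomain Fin.succ a (Fin.succ_injective n).injOn)) ∧
    Submodule.span K
      {q : MvPolynomial (Fin (n + 1)) K ⧸ J |
        ∃ a : ℕ, a < d ∧ ∃ m : Fin n →₀ ℕ,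
          IsStdMon
            (J.comap (MvPolynomial.rename (Fin.succ : Fin n → Fin (n + 1)) :
                MvPolynomial (Fin n) K →ₐ[K] MvPolynomial (Fin (n + 1)) K)) m ∧
          q = Ideal.Quotient.mk J
              (monomial (Finsupp.single 0 a + Finsupp.mapDomain Fin.succ m) (1 : K))}
      = ⊤ :=
  stmt12_general n J P hPmonic hPmem d hd
end

section
/- Let u_1,...,u_t : ℕ^n → K be sequences whose annihilator J = ann(u_1,...,u_t) is zero-dimensional, and let C be a set of polynomials whose residues modulo J span K[X_1,...,X_n]/J as a K-vector space. Then a polynomial f belongs to J if and only if ⟨u_i | c·f⟩ = 0 for every c in C and every i = 1,...,t. -/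
open MvPolynomial

/-! For each `i`, `g ↦ ⟨u_i ∣ g f⟩` is a linear form on `K[X]` that vanishes on `J` (an ideal
contained in `ann(u_i)`) and, by hypothesis, on `C`; since `C` spans `K[X]` modulo `J`, it vanishes
everywhere, and on the monomials `X^m` this says `(f·u_i)(m) = 0`. -/

theorem LinearMap.eq_zero_of_span_quotient_eq_top {K A M : Type*} [CommRing K] [CommRing A]
    [Algebra K A] [AddCommGroup M] [Module K M] {J : Ideal A} {C : Set A}
    (hC : Submodule.span K (Ideal.Quotient.mk J '' C) = ⊤) (φ : A →ₗ[K] M)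
    (hφJ : ∀ g ∈ J, φ g = 0) (hφC : ∀ c ∈ C, φ c = 0) : φ = 0 := by
  have hspan : Submodule.span K C ≤ LinearMap.ker φ := Submodule.span_le.mpr hφC
  ext g
  have hg : Ideal.Quotient.mk J g ∈
      (Submodule.span K C).map (Ideal.Quotient.mkₐ K J).toLinearMap := by
    rw [Submodule.map_span]
    exact hC ▸ Submodule.mem_top
  obtain ⟨c, hc, hcg⟩ := hg
  have hgc : g - c ∈ J := Ideal.Quotient.eq.mp hcg.symm
  calc φ g = φ c + φ (g - c) := by rw [← map_add, add_sub_cancel]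
    _ = 0 := by rw [hspan hc, hφJ _ hgc, add_zero]

section Sequences

variable {K : Type*} [Field K] {n : ℕ}

/-- Definitionally `seqBracket u`, as a polynomial is the finsupp of its coefficients. -/
noncomputable def seqBracketₗ (u : (Fin n →₀ ℕ) → K) : MvPolynomial (Fin n) K →ₗ[K] K :=
  (Finsupp.linearCombination K u).comp (AddMonoidAlgebra.coeffLinearEquiv K).toLinearMap

theorem seqAct_zero_apply (f : MvPolynomial (Fin n) K) (u : (Fin n →₀ ℕ) → K) :
    seqAct f u 0 = seqBracket u f := by
  rw [seqAct, monomial_zero', C_1, one_mul]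

end Sequences

theorem stmt13_general {K : Type*} [Field K] {n : ℕ} (t : ℕ)
    (u : Fin t → (Fin n →₀ ℕ) → K)
    (J : Ideal (MvPolynomial (Fin n) K))
    (hJ : ∀ f : MvPolynomial (Fin n) K, f ∈ J ↔ ∀ i, seqAct f (u i) = 0)
    (C : Set (MvPolynomial (Fin n) K))
    (hC : Submodule.span K (Ideal.Quotient.mk J '' C) = ⊤) :
    ∀ f : MvPolynomial (Fin n) K,
      f ∈ J ↔ ∀ c ∈ C, ∀ i, seqBracket (u i) (c * f) = 0 := by
  have bracket_eq_zero {g} (hg : g ∈ J) (i : Fin t) : seqBracket (u i) g = 0 := by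
    rw [← seqAct_zero_apply, (hJ g).mp hg i, Pi.zero_apply]
  refine fun f ↦ ⟨fun hf c _ i ↦ bracket_eq_zero (J.mul_mem_left c hf) i, fun h ↦ ?_⟩
  refine (hJ f).mpr fun i ↦ funext fun m ↦ ?_
  have hzero : (seqBracketₗ (u i)).comp (LinearMap.mulRight K f) = 0 :=
    LinearMap.eq_zero_of_span_quotient_eq_top hC _
      (fun g hg ↦ bracket_eq_zero (J.mul_mem_right f hg) i) (fun c hc ↦ h c hc i)
  exact LinearMap.congr_fun hzero (monomial m 1)

/-- Let `u_1,…,u_t` be sequences whose annihilator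
`J = ann(u_1,…,u_t)` is zero-dimensional, and let `C` be a set of polynomials
whose residues modulo `J` span `K[X]/J` as a `K`-vector space. Then `f ∈ J`
iff `⟨u_i ∣ c·f⟩ = 0` for every `c ∈ C` and every `i`. -/
theorem stmt13 {K : Type*} [Field K] {n : ℕ} (hn : 1 ≤ n) (t : ℕ)
    (u : Fin t → (Fin n →₀ ℕ) → K)
    (J : Ideal (MvPolynomial (Fin n) K))
    (hJ : ∀ f : MvPolynomial (Fin n) K, f ∈ J ↔ ∀ i, seqAct f (u i) = 0)
    (hfin : FiniteDimensional K (MvPolynomial (Fin n) K ⧸ J))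
    (C : Set (MvPolynomial (Fin n) K))
    (hC : Submodule.span K (Ideal.Quotient.mk J '' C) = ⊤) :
    ∀ f : MvPolynomial (Fin n) K,
      f ∈ J ↔ ∀ c ∈ C, ∀ i, seqBracket (u i) (c * f) = 0 :=
  stmt13_general t u J hJ C hC
end

section
/- Let I ⊆ K[X_1,...,X_n] be a zero-dimensional ideal whose minimal polynomial of X_n factors as P_min = T·R with T, R ∈ K[X_n] coprime, and let J = I + ⟨R(X_n)⟩. Then: (i) for every f ∈ J, the product T(X_n)·f lies in I, so the map φ : Q* → (K[X_1,...,X_n]/J)* sending ℓ to the linear form (f mod J) ↦ ℓ(T(X_n)·f mod I) is well defined; and (ii) φ is K-linear and surjective. -/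
/-!
Since `T R = P_min` vanishes in `Q`, multiplication by `T(X_n)` maps `J` into `I`, so it
induces a map `K[X]/J → Q`. A Bézout relation `uT + vR = 1` makes this map injective, and the
transpose of an injective linear map between vector spaces is surjective.
-/

open MvPolynomial

namespace Ideal

section

variable {A : Type*} [CommRing A] {I : Ideal A} {t r f : A}

theorem mul_mem_of_mem_sup_span_singleton (htr : t * r ∈ I) (hf : f ∈ I ⊔ span {r}) :
    t * f ∈ I := by
  obtain ⟨i, hi, _, hr, rfl⟩ := Submodule.mem_sup.mp hf
  obtain ⟨c, rfl⟩ := mem_span_singleton.mp hr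
  rw [mul_add, ← mul_assoc]
  exact I.add_mem (I.mul_mem_left t hi) (I.mul_mem_right c htr)

theorem mem_sup_span_singleton_of_mul_mem (hcop : IsCoprime t r) (hf : t * f ∈ I) :
    f ∈ I ⊔ span {r} := by
  obtain ⟨u, v, huv⟩ := hcop
  have hsplit : f = u * (t * f) + r * (v * f) := by linear_combination -f * huv
  rw [hsplit]
  exact Submodule.add_mem_sup (I.mul_mem_left u hf) (mul_mem_right _ _ (subset_span rfl))

end

variable {A : Type*} [CommRing A] (K : Type*) [CommRing K] [Algebra K A] (t : A) {I J : Ideal A}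

def quotientMulLeft (h : ∀ f ∈ J, t * f ∈ I) : (A ⧸ J) →ₗ[K] (A ⧸ I) :=
  (Submodule.mapQ J I (LinearMap.mulLeft A t) h).restrictScalars K

@[simp]
theorem quotientMulLeft_mk (h : ∀ f ∈ J, t * f ∈ I) (f : A) :
    quotientMulLeft K t h (Quotient.mk J f) = Quotient.mk I (t * f) :=
  rfl

theorem quotientMulLeft_injective (h : ∀ f ∈ J, t * f ∈ I)
    (hJ : ∀ f, t * f ∈ I → f ∈ J) : Function.Injective (quotientMulLeft K t h) := by
  intro a b hab
  obtain ⟨f, rfl⟩ := Quotient.mk_surjective a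
  obtain ⟨g, rfl⟩ := Quotient.mk_surjective b
  rw [quotientMulLeft_mk, quotientMulLeft_mk, Quotient.eq, ← mul_sub] at hab
  exact Quotient.eq.mpr (hJ _ hab)

end Ideal

theorem stmt15_general {K : Type*} [Field K] (n : ℕ)
    (I : Ideal (MvPolynomial (Fin (n + 1)) K))
    (Pmin T R : Polynomial K)
    (hPmem : Polynomial.aeval
        (X (Fin.last n) : MvPolynomial (Fin (n + 1)) K) Pmin ∈ I)
    (hfact : Pmin = T * R) (hcop : IsCoprime T R)
    (J : Ideal (MvPolynomial (Fin (n + 1)) K))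
    (hJ : J = I ⊔ Ideal.span
        {Polynomial.aeval (X (Fin.last n) : MvPolynomial (Fin (n + 1)) K) R}) :
    (∀ f ∈ J,
        Polynomial.aeval (X (Fin.last n) : MvPolynomial (Fin (n + 1)) K) T * f ∈ I) ∧
    ∃ φ : Module.Dual K (MvPolynomial (Fin (n + 1)) K ⧸ I) →ₗ[K]
        Module.Dual K (MvPolynomial (Fin (n + 1)) K ⧸ J),
      (∀ (ℓ : Module.Dual K (MvPolynomial (Fin (n + 1)) K ⧸ I))
          (f : MvPolynomial (Fin (n + 1)) K),
        φ ℓ (Ideal.Quotient.mk J f) =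
          ℓ (Ideal.Quotient.mk I
              (Polynomial.aeval (X (Fin.last n) : MvPolynomial (Fin (n + 1)) K) T * f))) ∧
      Function.Surjective φ := by
  subst hJ
  set x : MvPolynomial (Fin (n + 1)) K := X (Fin.last n)
  have hTR : Polynomial.aeval x T * Polynomial.aeval x R ∈ I := by
    rwa [← map_mul, ← hfact]
  have hmul : ∀ f ∈ I ⊔ Ideal.span {Polynomial.aeval x R}, Polynomial.aeval x T * f ∈ I :=
    fun _ => Ideal.mul_mem_of_mem_sup_span_singleton hTR
  have hcop' : IsCoprime (Polynomial.aeval x T) (Polynomial.aeval x R) :=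
    hcop.map (Polynomial.aeval x).toRingHom
  have hinj := Ideal.quotientMulLeft_injective K _ hmul fun _ =>
    Ideal.mem_sup_span_singleton_of_mul_mem hcop'
  exact ⟨hmul, (Ideal.quotientMulLeft K _ hmul).dualMap, fun _ _ => rfl,
    LinearMap.dualMap_surjective_of_injective hinj⟩

/-- Let `I ⊆ K[X_1,…,X_{n+1}]` be a zero-dimensional ideal
whose minimal polynomial of the last variable `X_{n+1}` factors as
`P_min = T·R` with `T, R` coprime, and let `J = I + ⟨R(X_{n+1})⟩`. Then:
(i) for every `f ∈ J`, `T(X_{n+1})·f ∈ I`, so the map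
`φ : Q* → (K[X]/J)*`, `φ(ℓ)(f mod J) = ℓ(T(X_{n+1})·f mod I)`, is well defined;
(ii) `φ` is `K`-linear and surjective. -/
theorem stmt15 {K : Type*} [Field K] (n : ℕ)
    (I : Ideal (MvPolynomial (Fin (n + 1)) K))
    (hfin : FiniteDimensional K (MvPolynomial (Fin (n + 1)) K ⧸ I))
    (Pmin T R : Polynomial K) (hPmonic : Pmin.Monic)
    (hPmem : Polynomial.aeval
        (X (Fin.last n) : MvPolynomial (Fin (n + 1)) K) Pmin ∈ I)
    (hPmin : ∀ Q : Polynomial K, Q.Monic →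
        Polynomial.aeval (X (Fin.last n) : MvPolynomial (Fin (n + 1)) K) Q ∈ I →
        Pmin.natDegree ≤ Q.natDegree)
    (hfact : Pmin = T * R) (hcop : IsCoprime T R)
    (J : Ideal (MvPolynomial (Fin (n + 1)) K))
    (hJ : J = I ⊔ Ideal.span
        {Polynomial.aeval (X (Fin.last n) : MvPolynomial (Fin (n + 1)) K) R}) :
    (∀ f ∈ J,
        Polynomial.aeval (X (Fin.last n) : MvPolynomial (Fin (n + 1)) K) T * f ∈ I) ∧
    ∃ φ : Module.Dual K (MvPolynomial (Fin (n + 1)) K ⧸ I) →ₗ[K]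
        Module.Dual K (MvPolynomial (Fin (n + 1)) K ⧸ J),
      (∀ (ℓ : Module.Dual K (MvPolynomial (Fin (n + 1)) K ⧸ I))
          (f : MvPolynomial (Fin (n + 1)) K),
        φ ℓ (Ideal.Quotient.mk J f) =
          ℓ (Ideal.Quotient.mk I
              (Polynomial.aeval (X (Fin.last n) : MvPolynomial (Fin (n + 1)) K) T * f))) ∧
      Function.Surjective φ :=
  stmt15_general n I Pmin T R hPmem hfact hcop J hJ
end

section
/- Let I ⊆ K[X_1,...,X_n] be a zero-dimensional ideal whose minimal polynomial of X_n factors as P_min = P_1^{e_1} ··· P_K^{e_K}, where P_1,...,P_K are pairwise distinct monic irreducible polynomials in K[X_n] and e_k ≥ 1 for all k. Set J_k = I + ⟨P_k(X_n)^{e_k}⟩ for k = 1,...,K. Then the ideals J_1,...,J_K are pairwise comaximal (J_k + J_{k'} = K[X_1,...,X_n] for k ≠ k') and I = J_1 ∩ ... ∩ J_K. -/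
open MvPolynomial

/-
Distinct monic irreducible polynomials are coprime, so the elements `P_k(X_n)^{e_k}` are pairwise
coprime, and hence so are the ideals `J_k` containing them. Modulo `I` the product of these
elements is `P_min(X_n) = 0`, and for pairwise coprime elements the intersection of the principal
ideals they generate is the principal ideal of their product; pulling back along `R → R ⧸ I`
gives `⨅ k, J_k = I`.
-/

theorem Polynomial.isCoprime_of_monic_of_irreducible_of_ne {K : Type*} [Field K]
    {p q : Polynomial K} (hp : p.Monic) (hq : q.Monic) (hpi : Irreducible p)
    (hqi : Irreducible q) (hne : p ≠ q) : IsCoprime p q :=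
  hpi.coprime_iff_not_dvd.mpr fun hdvd =>
    hne (eq_of_monic_of_associated hp hq (hpi.associated_of_dvd hqi hdvd))

namespace Ideal

theorem sup_eq_top_of_isCoprime_of_mem {R : Type*} [CommSemiring R] {J J' : Ideal R}
    {a b : R} (h : IsCoprime a b) (ha : a ∈ J) (hb : b ∈ J') : J ⊔ J' = ⊤ :=
  top_unique <| (sup_eq_top_iff_isCoprime a b).mpr h ▸
    sup_le_sup ((span_singleton_le_iff_mem J).mpr ha) ((span_singleton_le_iff_mem J').mpr hb)

theorem iInf_sup_span_singleton_eq_self {R ι : Type*} [CommRing R] [Fintype ι] (I : Ideal R)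
    {a : ι → R}
    (ha : ∀ i j, i ≠ j → IsCoprime (a i) (a j)) (hprod : ∏ i, a i ∈ I) :
    ⨅ i, I ⊔ span {a i} = I := by
  simp_rw [← comap_map_quotientMk, ← comap_iInf, map_span, Set.image_singleton,
    iInf_span_singleton fun i j hij => (ha i j hij).map (Quotient.mk I), ← map_prod,
    Quotient.eq_zero_iff_mem.mpr hprod, span_singleton_zero, ← RingHom.ker_eq_comap_bot,
    mk_ker]

end Ideal

theorem stmt17_general {K : Type*} [Field K] (n : ℕ)
    (I : Ideal (MvPolynomial (Fin (n + 1)) K))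
    (N : ℕ) (P : Fin N → Polynomial K) (e : Fin N → ℕ)
    (hmonic : ∀ k, (P k).Monic) (hirr : ∀ k, Irreducible (P k))
    (hdist : ∀ k k', k ≠ k' → P k ≠ P k')
    (Pmin : Polynomial K) (hPdef : Pmin = ∏ k, P k ^ e k)
    (hPmem : Polynomial.aeval
        (X (Fin.last n) : MvPolynomial (Fin (n + 1)) K) Pmin ∈ I)
    (J : Fin N → Ideal (MvPolynomial (Fin (n + 1)) K))
    (hJ : ∀ k, J k = I ⊔ Ideal.span
        {Polynomial.aeval (X (Fin.last n) : MvPolynomial (Fin (n + 1)) K)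
          (P k ^ e k)}) :
    (∀ k k', k ≠ k' → J k ⊔ J k' = ⊤) ∧ I = ⨅ k, J k := by
  have hcop : ∀ k k', k ≠ k' → IsCoprime
      (Polynomial.aeval (X (Fin.last n) : MvPolynomial (Fin (n + 1)) K) (P k ^ e k))
      (Polynomial.aeval (X (Fin.last n)) (P k' ^ e k')) := fun k k' hkk' =>
    ((Polynomial.isCoprime_of_monic_of_irreducible_of_ne (hmonic k) (hmonic k') (hirr k)
      (hirr k') (hdist k k' hkk')).pow).map _
  refine ⟨fun k k' hkk' => ?_, ?_⟩
  · rw [hJ, hJ]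
    exact Ideal.sup_eq_top_of_isCoprime_of_mem (hcop k k' hkk')
      (Ideal.mem_sup_right (Ideal.mem_span_singleton_self _))
      (Ideal.mem_sup_right (Ideal.mem_span_singleton_self _))
  · simp_rw [hJ]
    rw [Ideal.iInf_sup_span_singleton_eq_self I hcop]
    rwa [← map_prod, ← hPdef]

/-- Let `I ⊆ K[X_1,…,X_{n+1}]` be a zero-dimensional ideal whose
minimal polynomial of the last variable `X_{n+1}` factors as
`P_min = P_1^{e_1} ⋯ P_N^{e_N}` with `P_1,…,P_N` pairwise distinct monic
irreducible polynomials and `e_k ≥ 1`. Set `J_k = I + ⟨P_k(X_{n+1})^{e_k}⟩`.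
Then the `J_k` are pairwise comaximal and `I = J_1 ∩ … ∩ J_N`. -/
theorem stmt17 {K : Type*} [Field K] (n : ℕ)
    (I : Ideal (MvPolynomial (Fin (n + 1)) K))
    (hfin : FiniteDimensional K (MvPolynomial (Fin (n + 1)) K ⧸ I))
    (N : ℕ) (P : Fin N → Polynomial K) (e : Fin N → ℕ)
    (hmonic : ∀ k, (P k).Monic) (hirr : ∀ k, Irreducible (P k))
    (hdist : ∀ k k', k ≠ k' → P k ≠ P k') (he : ∀ k, 1 ≤ e k)
    (Pmin : Polynomial K) (hPdef : Pmin = ∏ k, P k ^ e k)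
    (hPmem : Polynomial.aeval
        (X (Fin.last n) : MvPolynomial (Fin (n + 1)) K) Pmin ∈ I)
    (hPmin : ∀ Q : Polynomial K, Q.Monic →
        Polynomial.aeval (X (Fin.last n) : MvPolynomial (Fin (n + 1)) K) Q ∈ I →
        Pmin.natDegree ≤ Q.natDegree)
    (J : Fin N → Ideal (MvPolynomial (Fin (n + 1)) K))
    (hJ : ∀ k, J k = I ⊔ Ideal.span
        {Polynomial.aeval (X (Fin.last n) : MvPolynomial (Fin (n + 1)) K)
          (P k ^ e k)}) :
    (∀ k k', k ≠ k' → J k ⊔ J k' = ⊤) ∧ I = ⨅ k, J k :=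
  stmt17_general n I N P e hmonic hirr hdist Pmin hPdef hPmem J hJ
end
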